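/- Effective ideal membership with uniform degree excess (the special case of Theorem 1.3 with X = ℙ^n, ℓ = 1, and G_1 = 1 noted in the paper): For every finite list of polynomials F_1, …, F_m in ℂ[z_1, …, z_n] there exists a natural number κ, depending only on F_1, …, F_m, such that every polynomial Φ belonging to the ideal (F_1, …, F_m) can be written Φ = P_1 F_1 + ⋯ + P_m F_m with polynomials P_j satisfying, for every j, total degree of P_j F_j at most deg Φ + κ. -/

import Mathlib

open MvPolynomial

namespace EffIdealAux

noncomputable section

/-- Exponent map for homogenization to degree `D`. -/
def eD (n D : ℕ) (s : Fin n →₀ ℕ) : Fin (n + 1) →₀ ℕ :=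
  Finsupp.cons (D - s.degree) s

/-- Homogenization to degree `D`. -/
def hm (n D : ℕ) (f : MvPolynomial (Fin n) ℂ) : MvPolynomial (Fin (n + 1)) ℂ :=
  AddMonoidAlgebra.mapDomain (eD n D) f

lemma degree_fin {k : ℕ} (d : Fin k →₀ ℕ) : d.degree = ∑ i, d i := by
  rw [Finsupp.degree]
  exact Finset.sum_subset (Finset.subset_univ _) (by
    intro i _ hi
    simpa using Finsupp.notMem_support_iff.mp hi)

lemma degree_add' {k : ℕ} (s t : Fin k →₀ ℕ) : (s + t).degree = s.degree + t.degree := by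
  simp [degree_fin, Finset.sum_add_distrib]

lemma degree_cons (n a : ℕ) (s : Fin n →₀ ℕ) :
    (Finsupp.cons a s).degree = a + s.degree := by
  rw [degree_fin, degree_fin, Fin.sum_univ_succ, Finsupp.cons_zero]
  simp [Finsupp.cons_succ]

lemma degree_tail_le (n : ℕ) (t : Fin (n + 1) →₀ ℕ) : (Finsupp.tail t).degree ≤ t.degree := by
  rw [degree_fin, degree_fin, Fin.sum_univ_succ]
  simp only [Finsupp.tail_apply]
  omega

lemma cons_add (n a b : ℕ) (s t : Fin n →₀ ℕ) :
    Finsupp.cons a s + Finsupp.cons b t = Finsupp.cons (a + b) (s + t) := by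
  ext i
  refine Fin.cases ?_ (fun i => ?_) i
  · simp [Finsupp.cons_zero]
  · simp [Finsupp.cons_succ]

lemma single_zero_add_cons (n a b : ℕ) (s : Fin n →₀ ℕ) :
    Finsupp.single (0 : Fin (n + 1)) a + Finsupp.cons b s = Finsupp.cons (a + b) s := by
  ext i
  refine Fin.cases ?_ (fun i => ?_) i
  · simp [Finsupp.cons_zero]
  · simp [Finsupp.cons_succ, Finsupp.single_eq_of_ne (Fin.succ_ne_zero i).symm]

lemma eD_add (n a b : ℕ) (s t : Fin n →₀ ℕ) (h1 : s.degree ≤ a) (h2 : t.degree ≤ b) :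
    eD n (a + b) (s + t) = eD n a s + eD n b t := by
  rw [eD, eD, eD, cons_add, degree_add']
  congr 1
  omega

lemma eD_shift (n k d : ℕ) (s : Fin n →₀ ℕ) (h1 : s.degree ≤ d) :
    Finsupp.single (0 : Fin (n + 1)) k + eD n d s = eD n (k + d) s := by
  rw [eD, eD, single_zero_add_cons]
  congr 1
  omega

lemma hm_add (n D : ℕ) (f g : MvPolynomial (Fin n) ℂ) :
    hm n D (f + g) = hm n D f + hm n D g := AddMonoidAlgebra.mapDomain_add _ _ _

lemma hm_zero (n D : ℕ) : hm n D 0 = 0 := AddMonoidAlgebra.mapDomain_zero _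

lemma hm_monomial (n D : ℕ) (s : Fin n →₀ ℕ) (c : ℂ) :
    hm n D (monomial s c) = monomial (eD n D s) c := by
  unfold hm
  rw [show (monomial s c : MvPolynomial (Fin n) ℂ) = AddMonoidAlgebra.single s c from rfl,
    AddMonoidAlgebra.mapDomain_single]
  rfl

lemma hm_sum {ι : Type*} (n D : ℕ) (t : Finset ι) (f : ι → MvPolynomial (Fin n) ℂ) :
    hm n D (∑ i ∈ t, f i) = ∑ i ∈ t, hm n D (f i) := by
  classical
  induction t using Finset.induction_on with
  | empty => simpa using hm_zero n D
  | insert _ _ h ih => rw [Finset.sum_insert h, Finset.sum_insert h, hm_add, ih]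

lemma degree_le_of_mem_support {n : ℕ} {f : MvPolynomial (Fin n) ℂ} {s : Fin n →₀ ℕ}
    (hs : s ∈ f.support) : s.degree ≤ f.totalDegree := by
  simpa [Finsupp.degree_apply, Finsupp.sum] using le_totalDegree hs

lemma hm_eq_sum (n D : ℕ) (f : MvPolynomial (Fin n) ℂ) :
    hm n D f = ∑ s ∈ f.support, monomial (eD n D s) (coeff s f) := by
  conv_lhs => rw [f.as_sum]
  rw [hm_sum]
  exact Finset.sum_congr rfl fun s _ => hm_monomial n D s _

lemma hm_isHomogeneous (n D : ℕ) (f : MvPolynomial (Fin n) ℂ) (h : f.totalDegree ≤ D) :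
    (hm n D f).IsHomogeneous D := by
  rw [← mem_homogeneousSubmodule, hm_eq_sum]
  refine Submodule.sum_mem _ fun s hs => ?_
  rw [mem_homogeneousSubmodule]
  refine isHomogeneous_monomial _ ?_
  rw [eD, degree_cons]
  have := le_trans (degree_le_of_mem_support hs) h
  omega

lemma hm_mul (n a b : ℕ) (f g : MvPolynomial (Fin n) ℂ)
    (hf : f.totalDegree ≤ a) (hg : g.totalDegree ≤ b) :
    hm n (a + b) (f * g) = hm n a f * hm n b g := by
  calc hm n (a + b) (f * g)
      = ∑ s ∈ f.support, ∑ t ∈ g.support,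
          monomial (eD n (a + b) (s + t)) (coeff s f * coeff t g) := by
        conv_lhs => rw [f.as_sum, g.as_sum, Finset.sum_mul_sum]
        rw [hm_sum]
        refine Finset.sum_congr rfl fun s _ => ?_
        rw [hm_sum]
        refine Finset.sum_congr rfl fun t _ => ?_
        rw [monomial_mul, hm_monomial]
    _ = ∑ s ∈ f.support, ∑ t ∈ g.support,
          monomial (eD n a s + eD n b t) (coeff s f * coeff t g) := by
        refine Finset.sum_congr rfl fun s hs => Finset.sum_congr rfl fun t ht => ?_
        rw [eD_add n a b s t (le_trans (degree_le_of_mem_support hs) hf)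
          (le_trans (degree_le_of_mem_support ht) hg)]
    _ = hm n a f * hm n b g := by
        rw [hm_eq_sum n a f, hm_eq_sum n b g, Finset.sum_mul_sum]
        exact Finset.sum_congr rfl fun s _ => Finset.sum_congr rfl fun t _ =>
          by rw [monomial_mul]

lemma hm_X0_pow (n k d : ℕ) (f : MvPolynomial (Fin n) ℂ) (hf : f.totalDegree ≤ d) :
    (X 0 : MvPolynomial (Fin (n + 1)) ℂ) ^ k * hm n d f = hm n (k + d) f := by
  rw [hm_eq_sum n d f, hm_eq_sum n (k + d) f, Finset.mul_sum]
  refine Finset.sum_congr rfl fun s hs => ?_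
  rw [X_pow_eq_monomial, monomial_mul, one_mul,
    eD_shift n k d s (le_trans (degree_le_of_mem_support hs) hf)]

/-- Dehomogenization: evaluate the first variable at 1. -/
def dh (n : ℕ) : MvPolynomial (Fin (n + 1)) ℂ →ₐ[ℂ] MvPolynomial (Fin n) ℂ :=
  aeval (Fin.cases 1 X)

lemma dh_monomial (n : ℕ) (t : Fin (n + 1) →₀ ℕ) (c : ℂ) :
    dh n (monomial t c) = monomial (Finsupp.tail t) c := by
  rw [dh, aeval_monomial, monomial_eq,
    Finsupp.prod_fintype _ _ (fun i => pow_zero _),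
    Finsupp.prod_fintype _ _ (fun i => pow_zero _), Fin.prod_univ_succ]
  simp [algebraMap_eq, Finsupp.tail_apply]

lemma dh_hm (n D : ℕ) (f : MvPolynomial (Fin n) ℂ) : dh n (hm n D f) = f := by
  rw [hm_eq_sum, map_sum]
  conv_rhs => rw [f.as_sum]
  refine Finset.sum_congr rfl fun s _ => ?_
  rw [dh_monomial, eD, Finsupp.tail_cons]

lemma dh_X0 (n : ℕ) : dh n (X 0) = 1 := by
  rw [dh, aeval_X]
  simp

lemma totalDegree_dh_le (n : ℕ) (p : MvPolynomial (Fin (n + 1)) ℂ) :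
    (dh n p).totalDegree ≤ p.totalDegree := by
  conv_lhs => rw [p.as_sum]
  rw [map_sum]
  refine le_trans (totalDegree_finset_sum _ _) ?_
  refine Finset.sup_le fun t ht => ?_
  rw [dh_monomial]
  refine le_trans (totalDegree_monomial_le _ _) ?_
  have h1 : (Finsupp.tail t).degree ≤ t.degree := degree_tail_le n t
  have h2 : t.degree ≤ p.totalDegree := degree_le_of_mem_support ht
  calc ((Finsupp.tail t).sum fun _ e => e) = (Finsupp.tail t).degree := by
        simp [Finsupp.degree_apply, Finsupp.sum]
    _ ≤ p.totalDegree := le_trans h1 h2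

lemma hc_mul (n D e : ℕ) (q g : MvPolynomial (Fin (n + 1)) ℂ) (hg : g.IsHomogeneous e) :
    homogeneousComponent D (q * g) =
      if e ≤ D then homogeneousComponent (D - e) q * g else 0 := by
  conv_lhs => rw [← q.sum_homogeneousComponent, Finset.sum_mul]
  rw [map_sum]
  have step : ∀ k, homogeneousComponent D (homogeneousComponent k q * g) =
      if D = k + e then homogeneousComponent k q * g else 0 := fun k =>
    homogeneousComponent_of_mem (by
      rw [mem_homogeneousSubmodule]
      exact (homogeneousComponent_isHomogeneous k q).mul hg)
  simp only [step]
  by_cases he : e ≤ D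
  · rw [if_pos he]
    have hiff : ∀ k, (D = k + e) = (k = D - e) := fun k => by
      apply propext; omega
    simp only [hiff]
    rw [Finset.sum_ite_eq' (Finset.range (q.totalDegree + 1)) (D - e)
      (fun k => homogeneousComponent k q * g)]
    by_cases hmem : D - e ∈ Finset.range (q.totalDegree + 1)
    · rw [if_pos hmem]
    · rw [if_neg hmem, homogeneousComponent_eq_zero _ q (by
        simp only [Finset.mem_range] at hmem; omega), zero_mul]
  · rw [if_neg he]
    refine Finset.sum_eq_zero fun k _ => ?_
    rw [if_neg (by omega)]

end

end EffIdealAux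

open EffIdealAux

/-- Effective ideal membership with uniform degree excess (the special case of
Theorem 1.3 with `X = ℙⁿ`, `ℓ = 1`, `G₁ = 1`). -/
theorem effective_ideal_membership_uniform_excess
    (n m : ℕ) (F : Fin m → MvPolynomial (Fin n) ℂ) :
    ∃ κ : ℕ,
      ∀ Φ : MvPolynomial (Fin n) ℂ, Φ ∈ Ideal.span (Set.range F) →
        ∃ P : Fin m → MvPolynomial (Fin n) ℂ,
          Φ = ∑ j, P j * F j ∧
          ∀ j, (P j * F j).totalDegree ≤ Φ.totalDegree + κ := by
  classical
  let dj : Fin m → ℕ := fun j => (F j).totalDegree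
  let g : Fin m → MvPolynomial (Fin (n + 1)) ℂ := fun j => hm n (dj j) (F j)
  let J : Ideal (MvPolynomial (Fin (n + 1)) ℂ) := Ideal.span (Set.range g)
  let Jc : ℕ →o Ideal (MvPolynomial (Fin (n + 1)) ℂ) :=
    ⟨fun k => J.colon (Ideal.span {(X 0 : MvPolynomial (Fin (n + 1)) ℂ) ^ k}), by
      intro k l hkl
      refine Submodule.colon_mono le_rfl ?_
      rw [SetLike.coe_subset_coe, Ideal.span_le, Set.singleton_subset_iff, SetLike.mem_coe,
        Ideal.mem_span_singleton]
      exact pow_dvd_pow _ hkl⟩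
  obtain ⟨N, hN⟩ := monotone_stabilizes_iff_noetherian.mpr
    (isNoetherianRing_iff.mp inferInstance) Jc
  refine ⟨N, fun Φ hΦ => ?_⟩
  obtain ⟨c, hc⟩ := Ideal.mem_span_range_iff_exists_fun.mp hΦ
  set d := Φ.totalDegree with hd
  set D0 := max (Finset.univ.sup fun j => (c j).totalDegree + dj j) d with hD0
  have hdjD0 : ∀ j, (c j).totalDegree + dj j ≤ D0 := fun j => by
    rw [hD0]
    exact le_trans (Finset.le_sup (f := fun j => (c j).totalDegree + dj j)
      (Finset.mem_univ j)) le_sup_left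
  have hgj : ∀ j, (g j).IsHomogeneous (dj j) := fun j => hm_isHomogeneous n _ _ le_rfl
  have hΦD0 : hm n D0 Φ ∈ J := by
    rw [← hc, hm_sum]
    refine Ideal.sum_mem _ fun j _ => ?_
    have h1 : dj j ≤ D0 := le_trans (Nat.le_add_left _ _) (hdjD0 j)
    have h2 : (c j).totalDegree ≤ D0 - dj j := by have := hdjD0 j; omega
    have hsplit : hm n D0 (c j * F j) = hm n (D0 - dj j) (c j) * g j := by
      conv_lhs => rw [show D0 = (D0 - dj j) + dj j by omega]
      exact hm_mul n _ _ _ _ h2 le_rfl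
    rw [hsplit]
    exact Ideal.mul_mem_left _ _ (Ideal.subset_span ⟨j, rfl⟩)
  have hdD0 : d ≤ D0 := by rw [hD0]; exact le_sup_right
  have hmem1 : hm n d Φ ∈ Jc (D0 - d) := by
    show hm n d Φ ∈ J.colon (Ideal.span {(X 0 : MvPolynomial (Fin (n + 1)) ℂ) ^ (D0 - d)})
    rw [Ideal.mem_colon_span_singleton, mul_comm, hm_X0_pow n _ _ _ le_rfl,
      show D0 - d + d = D0 by omega]
    exact hΦD0
  have hmem2 : hm n d Φ ∈ Jc N := by
    rcases le_total (D0 - d) N with h | h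
    · exact Jc.monotone h hmem1
    · rw [hN (D0 - d) h]; exact hmem1
  set D := N + d with hD
  have hxJ : hm n D Φ ∈ J := by
    rw [hD, ← hm_X0_pow n N d Φ le_rfl, mul_comm]
    exact Ideal.mem_colon_span_singleton.mp hmem2
  obtain ⟨q, hq⟩ := Ideal.mem_span_range_iff_exists_fun.mp hxJ
  set p : Fin m → MvPolynomial (Fin (n + 1)) ℂ :=
    fun j => if dj j ≤ D then homogeneousComponent (D - dj j) (q j) else 0 with hp
  have hrep : hm n D Φ = ∑ j, p j * g j := by
    have h0 : homogeneousComponent D (hm n D Φ) = hm n D Φ := by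
      rw [homogeneousComponent_of_mem (p := hm n D Φ) (by
        rw [mem_homogeneousSubmodule]
        exact hm_isHomogeneous n D Φ (by omega)), if_pos rfl]
    calc hm n D Φ = homogeneousComponent D (hm n D Φ) := h0.symm
      _ = ∑ j, homogeneousComponent D (q j * g j) := by rw [← hq, map_sum]
      _ = ∑ j, p j * g j := by
          refine Finset.sum_congr rfl fun j _ => ?_
          rw [hc_mul n D (dj j) (q j) (g j) (hgj j)]
          simp only [hp]
          by_cases hj : dj j ≤ D
          · rw [if_pos hj, if_pos hj]
          · rw [if_neg hj, if_neg hj, zero_mul]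
  have e1 : Φ = ∑ j, dh n (p j) * F j := by
    conv_lhs => rw [← dh_hm n D Φ]
    rw [hrep, map_sum]
    refine Finset.sum_congr rfl fun j _ => ?_
    rw [map_mul, dh_hm]
  refine ⟨fun j => dh n (p j), e1, fun j => ?_⟩
  show ((dh n (p j)) * F j).totalDegree ≤ d + N
  by_cases hj : dj j ≤ D
  · have hpj : (p j).IsHomogeneous (D - dj j) := by
      rw [hp]; simp only [if_pos hj]
      exact homogeneousComponent_isHomogeneous _ _
    have h1 : (dh n (p j)).totalDegree ≤ D - dj j :=
      le_trans (totalDegree_dh_le n _) hpj.totalDegree_le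
    refine le_trans (totalDegree_mul _ _) ?_
    calc (dh n (p j)).totalDegree + (F j).totalDegree ≤ (D - dj j) + dj j :=
          add_le_add h1 le_rfl
      _ ≤ D := by omega
      _ = d + N := by rw [hD]; omega
  · have : p j = 0 := by rw [hp]; simp only [if_neg hj]
    rw [this, map_zero, zero_mul, totalDegree_zero]
    exact Nat.zero_le _
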